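/- In the setting of the previous model, if additionally ‖Θ₀‖_∞ ≥ 1/n (max entry at least 1/n), then E‖A − Θ₀‖_□ ≤ 24·√(‖Θ₀‖_∞/n). -/

import Mathlib

/-!
For fixed `S, T` the cut sum `∑_{i ∈ S, j ∈ T} (A - Θ₀)ᵢⱼ` is a weighted sum, over the
independent edges `i < j`, of centred Bernoulli variables with weights in `{0, 1, 2}`; hence its
moment generating function at `s` is at most `exp (4 n² ‖Θ₀‖_∞ s²)` when `|s| ≤ 1/2`.
If `N` random variables have moment generating functions at most `exp v` at `± t`, then
`E maxₖ |Yₖ| ≤ (log (2N) + v) / t`. For the `N = 4ⁿ` pairs `(S, T)` this gives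
`E ‖A - Θ₀‖_□ ≤ (2n + 1 + 4n² ‖Θ₀‖_∞ t²) / (t n²)`, and `t = 1 / (2 √(n ‖Θ₀‖_∞))`,
admissible because `n ‖Θ₀‖_∞ ≥ 1`, turns this into `8 √(‖Θ₀‖_∞ / n)`.
-/

open MeasureTheory ProbabilityTheory

/-- Normalized cut norm of an `n × n` real matrix. -/
noncomputable def matCutNorm {n : ℕ} (B : Matrix (Fin n) (Fin n) ℝ) : ℝ :=
  (1 / (n : ℝ) ^ 2) * ⨆ S : Finset (Fin n), ⨆ T : Finset (Fin n),
    |∑ i ∈ S, ∑ j ∈ T, B i j|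

/-- Entrywise sup norm (maximal entry) of a matrix. -/
noncomputable def matLinftyNorm {n : ℕ} (B : Matrix (Fin n) (Fin n) ℝ) : ℝ :=
  ⨆ p : Fin n × Fin n, |B p.1 p.2|

open Real Finset

theorem Fintype.sum_sum_eq_sum_lt_add_swap {α M : Type*} [Fintype α] [LinearOrder α]
    [AddCommMonoid M] (f : α → α → M) (hf : ∀ i, f i i = 0) :
    ∑ i, ∑ j, f i j = ∑ p : {p : α × α // p.1 < p.2}, (f p.1.1 p.1.2 + f p.1.2 p.1.1) := by
  have hgt : ∑ p ∈ univ.filter (fun p : α × α => ¬ p.1 < p.2), f p.1 p.2 =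
      ∑ p ∈ univ.filter (fun p : α × α => p.1 < p.2), f p.2 p.1 := by
    rw [sum_filter, sum_filter, ← (Equiv.prodComm α α).sum_comp]
    refine Fintype.sum_congr _ _ fun p => ?_
    rcases lt_trichotomy p.1 p.2 with h | h | h
    · simp [h, h.not_gt]
    · simp [h, hf]
    · simp [h, h.not_gt]
  rw [← Fintype.sum_prod_type',
    ← sum_filter_add_sum_filter_not univ (fun p : α × α => p.1 < p.2), hgt, ← sum_add_distrib,
    sum_subtype (p := fun p : α × α => p.1 < p.2) _ (by simp)]

def cutSum {α : Type*} (B : Matrix α α ℝ) (S T : Finset α) : ℝ :=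
  ∑ i ∈ S, ∑ j ∈ T, B i j

def cutWeight {α : Type*} [DecidableEq α] (S T : Finset α) (i j : α) : ℝ :=
  (if i ∈ S ∧ j ∈ T then 1 else 0) + (if j ∈ S ∧ i ∈ T then 1 else 0)

theorem abs_cutWeight_le_two {α : Type*} [DecidableEq α] (S T : Finset α) (i j : α) :
    |cutWeight S T i j| ≤ 2 := by
  unfold cutWeight
  split_ifs <;> norm_num

theorem cutSum_eq_sum_lt_cutWeight_mul {α : Type*} [Fintype α] [LinearOrder α]
    {B : Matrix α α ℝ} (hB : B.IsSymm) (hdiag : ∀ i, B i i = 0) (S T : Finset α) :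
    cutSum B S T =
      ∑ p : {p : α × α // p.1 < p.2}, cutWeight S T p.1.1 p.1.2 * B p.1.1 p.1.2 := by
  have hST : cutSum B S T = ∑ i, ∑ j, if i ∈ S ∧ j ∈ T then B i j else 0 := by
    simp [cutSum, ite_and, sum_ite_irrel]
  rw [hST, Fintype.sum_sum_eq_sum_lt_add_swap _ fun i => by simp [hdiag]]
  refine Fintype.sum_congr _ _ fun p => ?_
  rw [hB.apply p.1.1 p.1.2, cutWeight]
  split_ifs <;> ring

theorem abs_cutSum_le_card_mul {α : Type*} {B : Matrix α α ℝ} (hB : ∀ i j, |B i j| ≤ 1)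
    (S T : Finset α) : |cutSum B S T| ≤ #S * #T := by
  calc |cutSum B S T| ≤ ∑ i ∈ S, ∑ j ∈ T, |B i j| :=
        (abs_sum_le_sum_abs _ _).trans (sum_le_sum fun i _ => abs_sum_le_sum_abs _ _)
    _ ≤ ∑ i ∈ S, ∑ j ∈ T, (1 : ℝ) := by gcongr; exact hB _ _
    _ = #S * #T := by simp

theorem le_matLinftyNorm {n : ℕ} (B : Matrix (Fin n) (Fin n) ℝ) (i j : Fin n) :
    |B i j| ≤ matLinftyNorm B :=
  le_ciSup (f := fun p : Fin n × Fin n => |B p.1 p.2|) (Finite.bddAbove_range _) (i, j)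

theorem matLinftyNorm_nonneg {n : ℕ} (B : Matrix (Fin n) (Fin n) ℝ) : 0 ≤ matLinftyNorm B :=
  Real.iSup_nonneg fun _ => abs_nonneg _

theorem matCutNorm_eq_iSup_prod_div {n : ℕ} (B : Matrix (Fin n) (Fin n) ℝ) :
    matCutNorm B = (⨆ ST : Finset (Fin n) × Finset (Fin n), |cutSum B ST.1 ST.2|) / n ^ 2 := by
  rw [Finite.ciSup_prod (fun ST : Finset (Fin n) × Finset (Fin n) => |cutSum B ST.1 ST.2|),
    matCutNorm, one_div_mul_eq_div]
  rfl

theorem log_two_mul_card_finset_prod_le (n : ℕ) :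
    log (2 * Fintype.card (Finset (Fin n) × Finset (Fin n))) ≤ 2 * n + 1 := by
  rw [Fintype.card_prod, Fintype.card_finset, Fintype.card_fin]
  push_cast
  rw [← pow_add, ← pow_succ', log_pow]
  push_cast
  nlinarith [log_two_lt_d9]

theorem MeasureTheory.integral_pos_of_forall_pos {Ω : Type*} [MeasurableSpace Ω] {μ : Measure Ω}
    [NeZero μ] {G : Ω → ℝ} (hG : Integrable G μ) (hpos : ∀ ω, 0 < G ω) : 0 < ∫ ω, G ω ∂μ := by
  rw [integral_pos_iff_support_of_nonneg (fun ω => (hpos ω).le) hG]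
  simp [Function.support_eq_univ fun ω => (hpos ω).ne', NeZero.ne μ]

section

variable {Ω : Type*} [MeasurableSpace Ω] {μ : Measure Ω} [IsProbabilityMeasure μ]

theorem mgf_sub_le_exp_mul_sq_of_bernoulli {X : Ω → ℝ} (hX : Measurable X)
    (h01 : ∀ ω, X ω = 0 ∨ X ω = 1) {p : ℝ} (hp : μ.real {ω | X ω = 1} = p) {s : ℝ}
    (hs : |s| ≤ 1) : mgf (fun ω => X ω - p) μ s ≤ exp (p * s ^ 2) := by
  have hE : MeasurableSet {ω | X ω = 1} := hX (measurableSet_singleton 1)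
  have hX_ind : X = {ω | X ω = 1}.indicator 1 := by
    ext ω
    rcases h01 ω with h | h <;> simp [Set.indicator, h]
  have hmgfX : mgf X μ s = 1 + (exp s - 1) * p := by
    have hexp : (fun ω => exp (s * X ω)) = fun ω => 1 + (exp s - 1) * X ω := by
      ext ω
      rcases h01 ω with h | h <;> simp [h]
    have hint : Integrable X μ := hX_ind ▸ (integrable_const 1).indicator hE
    rw [mgf, hexp, integral_add (integrable_const 1) (hint.const_mul _), integral_const_mul,
      hX_ind, integral_indicator_one hE, hp]
    simp
  have hp0 : 0 ≤ p := hp ▸ measureReal_nonneg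
  have hexp_le : exp s - 1 ≤ s + s ^ 2 := by
    linarith [(abs_le.1 (abs_exp_sub_one_sub_id_le hs)).2]
  calc mgf (fun ω => X ω - p) μ s = (1 + (exp s - 1) * p) * exp (-(s * p)) := by
        simp_rw [sub_eq_add_neg (X _), mgf_add_const, hmgfX, mul_neg]
    _ ≤ exp ((exp s - 1) * p) * exp (-(s * p)) := by
        gcongr; linarith [add_one_le_exp ((exp s - 1) * p)]
    _ ≤ exp ((s + s ^ 2) * p) * exp (-(s * p)) := by gcongr
    _ = exp (p * s ^ 2) := by rw [← exp_add]; ring_nf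

theorem ProbabilityTheory.iIndepFun.mgf_sum_mul_sub_le_of_bernoulli {ι : Type*} [Fintype ι]
    {X : ι → Ω → ℝ} (hind : iIndepFun X μ) (hX : ∀ k, Measurable (X k))
    (h01 : ∀ k ω, X k ω = 0 ∨ X k ω = 1) {p : ι → ℝ}
    (hp : ∀ k, μ.real {ω | X k ω = 1} = p k)
    (c : ι → ℝ) {s : ℝ} (hs : ∀ k, |c k * s| ≤ 1) :
    mgf (fun ω => ∑ k, c k * (X k ω - p k)) μ s ≤ exp (s ^ 2 * ∑ k, c k ^ 2 * p k) := by
  set Z : ι → Ω → ℝ := fun k ω => c k * (X k ω - p k)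
  have hZind : iIndepFun Z μ :=
    hind.comp (fun k x => c k * (x - p k)) fun k => (measurable_id.sub_const _).const_mul _
  have hZ : ∀ k, Measurable (Z k) := fun k => ((hX k).sub_const _).const_mul _
  have hsum : (fun ω => ∑ k, Z k ω) = ∑ k, Z k := by ext ω; simp
  rw [hsum, hZind.mgf_sum hZ, mul_sum, exp_sum]
  refine prod_le_prod (fun k _ => mgf_nonneg) fun k _ => ?_
  calc mgf (Z k) μ s = mgf (fun ω => X k ω - p k) μ (c k * s) := mgf_const_mul _
    _ ≤ exp (p k * (c k * s) ^ 2) :=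
        mgf_sub_le_exp_mul_sq_of_bernoulli (hX k) (h01 k) (hp k) (hs k)
    _ = exp (s ^ 2 * (c k ^ 2 * p k)) := by ring_nf

theorem integral_le_log_integral_of_le_log {F G : Ω → ℝ} (hF : 0 ≤ F) (hG : Integrable G μ)
    (hGpos : ∀ ω, 0 < G ω) (hFG : ∀ ω, F ω ≤ log (G ω)) :
    ∫ ω, F ω ∂μ ≤ log (∫ ω, G ω ∂μ) := by
  set C := ∫ ω, G ω ∂μ
  have hC : 0 < C := integral_pos_of_forall_pos hG hGpos
  -- `log` lies below its tangent line at `C`; this is Jensen's inequality for `log`.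
  have htangent : ∀ ω, F ω ≤ log C + G ω / C - 1 := fun ω => by
    have := log_le_sub_one_of_pos (div_pos (hGpos ω) hC)
    rw [log_div (hGpos ω).ne' hC.ne'] at this
    linarith [hFG ω]
  have hint : Integrable (fun ω => log C + G ω / C - 1) μ :=
    ((integrable_const _).add (hG.div_const C)).sub (integrable_const 1)
  calc ∫ ω, F ω ∂μ ≤ ∫ ω, (log C + G ω / C - 1) ∂μ :=
        integral_mono_of_nonneg (.of_forall hF) hint (.of_forall htangent)
    _ = log C := by
        rw [integral_sub (by fun_prop) (integrable_const 1), integral_add (integrable_const _)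
          (hG.div_const C), integral_div]
        simp [C, div_self hC.ne']

theorem integral_iSup_abs_le_of_mgf_le {ι : Type*} [Fintype ι] [Nonempty ι]
    {Y : ι → Ω → ℝ} {t v : ℝ} (ht : 0 < t)
    (hint : ∀ k, Integrable (fun ω => exp (t * Y k ω)) μ)
    (hint' : ∀ k, Integrable (fun ω => exp (-t * Y k ω)) μ)
    (hmgf : ∀ k, mgf (Y k) μ t ≤ exp v) (hmgf' : ∀ k, mgf (Y k) μ (-t) ≤ exp v) :
    ∫ ω, ⨆ k, |Y k ω| ∂μ ≤ (log (2 * Fintype.card ι) + v) / t := by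
  set G : Ω → ℝ := fun ω => ∑ k, (exp (t * Y k ω) + exp (-t * Y k ω))
  have hGk : ∀ k, Integrable (fun ω => exp (t * Y k ω) + exp (-t * Y k ω)) μ :=
    fun k => (hint k).add (hint' k)
  have hG : Integrable G μ := integrable_finsetSum _ fun k _ => hGk k
  have hGpos : ∀ ω, 0 < G ω := fun ω => sum_pos (fun k _ => by positivity) univ_nonempty
  have hsup : ∀ ω, t * ⨆ k, |Y k ω| ≤ log (G ω) := fun ω => by
    rw [mul_iSup_of_nonneg ht.le]
    refine ciSup_le fun k => (le_log_iff_exp_le (hGpos ω)).2 ?_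
    calc exp (t * |Y k ω|) ≤ exp (t * Y k ω) + exp (-t * Y k ω) := by
          rcases abs_cases (Y k ω) with ⟨h, _⟩ | ⟨h, _⟩ <;> rw [h]
          · linarith [exp_pos (-t * Y k ω)]
          · rw [mul_neg, ← neg_mul]; linarith [exp_pos (t * Y k ω)]
      _ ≤ G ω := single_le_sum (f := fun k => exp (t * Y k ω) + exp (-t * Y k ω))
          (fun k _ => by positivity) (mem_univ k)
  have hintG : ∫ ω, G ω ∂μ ≤ 2 * Fintype.card ι * exp v := by
    calc ∫ ω, G ω ∂μ = ∑ k, (mgf (Y k) μ t + mgf (Y k) μ (-t)) := by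
          rw [integral_finsetSum _ fun k _ => hGk k]
          exact sum_congr rfl fun k _ => integral_add (hint k) (hint' k)
      _ ≤ ∑ _k : ι, 2 * exp v := sum_le_sum fun k _ => by linarith [hmgf k, hmgf' k]
      _ = 2 * Fintype.card ι * exp v := by simp; ring
  have hjensen := integral_le_log_integral_of_le_log
    (fun ω => mul_nonneg ht.le (iSup_nonneg fun k => abs_nonneg (Y k ω))) hG hGpos hsup
  rw [integral_const_mul] at hjensen
  rw [le_div_iff₀ ht, mul_comm]
  calc t * ∫ ω, ⨆ k, |Y k ω| ∂μ ≤ log (∫ ω, G ω ∂μ) := hjensen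
    _ ≤ log (2 * Fintype.card ι * exp v) :=
        log_le_log (integral_pos_of_forall_pos hG hGpos) hintG
    _ = log (2 * Fintype.card ι) + v := by
        rw [log_mul (by positivity) (exp_pos v).ne', log_exp]

end

structure IsInhomogeneousRandomGraph {Ω : Type*} [MeasurableSpace Ω] {n : ℕ} (μ : Measure Ω)
    (Θ : Matrix (Fin n) (Fin n) ℝ) (A : Ω → Matrix (Fin n) (Fin n) ℝ) : Prop where
  prob_symm : Θ.IsSymm
  prob_diag : ∀ i, Θ i i = 0
  prob_mem_Icc : ∀ i j, Θ i j ∈ Set.Icc (0 : ℝ) 1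
  measurable : ∀ i j, Measurable fun ω => A ω i j
  symm : ∀ ω, (A ω).IsSymm
  diag : ∀ ω i, A ω i i = 0
  zero_or_one : ∀ ω i j, A ω i j = 0 ∨ A ω i j = 1
  measureReal_eq_one : ∀ i j, i < j → μ.real {ω | A ω i j = 1} = Θ i j
  iIndepFun : iIndepFun (fun p : {p : Fin n × Fin n // p.1 < p.2} => fun ω => A ω p.1.1 p.1.2) μ

namespace IsInhomogeneousRandomGraph

variable {Ω : Type*} [MeasurableSpace Ω] {μ : Measure Ω} [IsProbabilityMeasure μ] {n : ℕ}
  {Θ : Matrix (Fin n) (Fin n) ℝ} {A : Ω → Matrix (Fin n) (Fin n) ℝ}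

theorem mgf_cutSum_sub_le (hG : IsInhomogeneousRandomGraph μ Θ A) (S T : Finset (Fin n)) {s : ℝ}
    (hs : |s| ≤ 1 / 2) :
    mgf (fun ω => cutSum (A ω - Θ) S T) μ s ≤ exp (4 * n ^ 2 * matLinftyNorm Θ * s ^ 2) := by
  have hpairs : (fun ω => cutSum (A ω - Θ) S T) = fun ω =>
      ∑ p : {p : Fin n × Fin n // p.1 < p.2},
        cutWeight S T p.1.1 p.1.2 * (A ω p.1.1 p.1.2 - Θ p.1.1 p.1.2) :=
    funext fun ω => cutSum_eq_sum_lt_cutWeight_mul ((hG.symm ω).sub hG.prob_symm)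
      (fun i => by simp [hG.diag, hG.prob_diag]) S T
  rw [hpairs]
  refine (hG.iIndepFun.mgf_sum_mul_sub_le_of_bernoulli (fun p => hG.measurable _ _)
    (fun p ω => hG.zero_or_one ω _ _) (fun p => hG.measureReal_eq_one _ _ p.2) _
    fun p => ?_).trans (exp_le_exp.2 ?_)
  · rw [abs_mul]
    nlinarith [abs_cutWeight_le_two S T p.1.1 p.1.2, abs_nonneg s]
  have hterm : ∀ p : {p : Fin n × Fin n // p.1 < p.2},
      cutWeight S T p.1.1 p.1.2 ^ 2 * Θ p.1.1 p.1.2 ≤ 4 * matLinftyNorm Θ := fun p => by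
    have hθ0 := (hG.prob_mem_Icc p.1.1 p.1.2).1
    have hθu := (le_abs_self _).trans (le_matLinftyNorm Θ p.1.1 p.1.2)
    have hc : cutWeight S T p.1.1 p.1.2 ^ 2 ≤ 4 := by
      nlinarith [abs_le.1 (abs_cutWeight_le_two S T p.1.1 p.1.2)]
    nlinarith
  have hcard : (Fintype.card {p : Fin n × Fin n // p.1 < p.2} : ℝ) ≤ n ^ 2 := by
    have := Fintype.card_subtype_le fun p : Fin n × Fin n => p.1 < p.2
    simp only [Fintype.card_prod, Fintype.card_fin] at this
    exact_mod_cast this.trans_eq (sq n).symm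
  calc s ^ 2 * ∑ p : {p : Fin n × Fin n // p.1 < p.2},
        cutWeight S T p.1.1 p.1.2 ^ 2 * Θ p.1.1 p.1.2
      ≤ s ^ 2 * ∑ _p : {p : Fin n × Fin n // p.1 < p.2}, 4 * matLinftyNorm Θ :=
        mul_le_mul_of_nonneg_left (sum_le_sum fun p _ => hterm p) (sq_nonneg s)
    _ = s ^ 2 * (Fintype.card {p : Fin n × Fin n // p.1 < p.2} * (4 * matLinftyNorm Θ)) := by
        rw [sum_const, card_univ, nsmul_eq_mul]
    _ ≤ s ^ 2 * (n ^ 2 * (4 * matLinftyNorm Θ)) := by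
        have := matLinftyNorm_nonneg Θ
        gcongr
    _ = 4 * n ^ 2 * matLinftyNorm Θ * s ^ 2 := by ring

theorem integrable_exp_mul_cutSum_sub (hG : IsInhomogeneousRandomGraph μ Θ A)
    (S T : Finset (Fin n)) (t : ℝ) :
    Integrable (fun ω => exp (t * cutSum (A ω - Θ) S T)) μ := by
  have hbound : ∀ ω i j, |(A ω - Θ) i j| ≤ 1 := fun ω i j => by
    obtain ⟨h0, h1⟩ := hG.prob_mem_Icc i j
    rcases hG.zero_or_one ω i j with h | h <;> rw [Matrix.sub_apply, h, abs_le] <;>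
      constructor <;> linarith
  refine integrable_exp_mul_of_mem_Icc (a := -(#S * #T)) (b := #S * #T) ?_
    (.of_forall fun ω => abs_le.1 (abs_cutSum_le_card_mul (hbound ω) S T))
  exact (Finset.measurable_sum _ fun i _ => Finset.measurable_sum _ fun j _ =>
    (hG.measurable i j).sub_const _).aemeasurable

theorem integral_matCutNorm_sub_le (hG : IsInhomogeneousRandomGraph μ Θ A) {t : ℝ} (ht : 0 < t)
    (ht2 : t ≤ 1 / 2) :
    ∫ ω, matCutNorm (A ω - Θ) ∂μ ≤
      (2 * n + 1 + 4 * n ^ 2 * matLinftyNorm Θ * t ^ 2) / t / n ^ 2 := by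
  have htabs : |t| ≤ 1 / 2 := (abs_of_pos ht).trans_le ht2
  have hmax := integral_iSup_abs_le_of_mgf_le (μ := μ)
    (Y := fun (ST : Finset (Fin n) × Finset (Fin n)) ω => cutSum (A ω - Θ) ST.1 ST.2)
    (v := 4 * n ^ 2 * matLinftyNorm Θ * t ^ 2) ht
    (fun ST => hG.integrable_exp_mul_cutSum_sub _ _ _)
    (fun ST => hG.integrable_exp_mul_cutSum_sub _ _ _)
    (fun ST => hG.mgf_cutSum_sub_le _ _ htabs)
    (fun ST => (hG.mgf_cutSum_sub_le _ _ (by rwa [abs_neg])).trans_eq (by rw [neg_sq]))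
  simp_rw [matCutNorm_eq_iSup_prod_div]
  rw [integral_div]
  grw [hmax, log_two_mul_card_finset_prod_le]

end IsInhomogeneousRandomGraph

/-- If moreover `‖Θ₀‖_∞ ≥ 1/n`, then `E‖A − Θ₀‖_□ ≤ 24·√(‖Θ₀‖_∞/n)`. -/
theorem expected_cutNorm_adjacency_sup {Ω : Type*} [MeasurableSpace Ω] (μ : Measure Ω)
    [IsProbabilityMeasure μ] {n : ℕ} (hn : 0 < n)
    (Θ₀ : Matrix (Fin n) (Fin n) ℝ)
    (hΘsymm : Θ₀.IsSymm) (hΘdiag : ∀ i, Θ₀ i i = 0)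
    (hΘrange : ∀ i j, Θ₀ i j ∈ Set.Icc (0:ℝ) 1)
    (hΘinf : 1 / (n : ℝ) ≤ matLinftyNorm Θ₀)
    (A : Ω → Matrix (Fin n) (Fin n) ℝ)
    (hAmeas : ∀ i j, Measurable fun ω => A ω i j)
    (hAsymm : ∀ ω, (A ω).IsSymm) (hAdiag : ∀ ω i, A ω i i = 0)
    (hAval : ∀ ω i j, A ω i j = 0 ∨ A ω i j = 1)
    (hABern : ∀ i j, i < j → (μ {ω | A ω i j = 1}).toReal = Θ₀ i j)
    (hAindep : iIndepFun
      (fun p : {p : Fin n × Fin n // p.1 < p.2} => fun ω => A ω p.1.1 p.1.2) μ) :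
    ∫ ω, matCutNorm (A ω - Θ₀) ∂μ ≤
      24 * Real.sqrt (matLinftyNorm Θ₀ / (n : ℝ)) := by
  have hG : IsInhomogeneousRandomGraph μ Θ₀ A :=
    ⟨hΘsymm, hΘdiag, hΘrange, hAmeas, hAsymm, hAdiag, hAval, hABern, hAindep⟩
  set u := matLinftyNorm Θ₀
  have hn' : (1 : ℝ) ≤ n := by exact_mod_cast hn
  have hnu : 1 ≤ n * u := by rwa [div_le_iff₀' (by positivity)] at hΘinf
  set q := √(n * u)
  have hq : 1 ≤ q := one_le_sqrt.2 hnu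
  have hq2 : q ^ 2 = n * u := sq_sqrt (by linarith)
  have hsqrt : √(u / n) = q / n := by
    rw [show u / n = n * u / n ^ 2 by field_simp, sqrt_div' _ (by positivity),
      sqrt_sq (by positivity)]
  calc ∫ ω, matCutNorm (A ω - Θ₀) ∂μ
      ≤ (2 * n + 1 + 4 * n ^ 2 * u * (1 / (2 * q)) ^ 2) / (1 / (2 * q)) / n ^ 2 :=
        hG.integral_matCutNorm_sub_le (by positivity)
          (one_div_le_one_div_of_le two_pos (by linarith))
    _ ≤ 24 * √(u / n) := by
        rw [hsqrt, div_div_eq_mul_div, div_le_iff₀ (by positivity)]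
        field_simp
        rw [hq2]
        nlinarith
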